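/- Let H be a real Hilbert space, assume (H1), (H2) and (H3), and suppose moreover that ∫_{T0}^T [β1(τ) + ∫_{T0}^τ β2(τ,s) ds] dτ < 1/4. Let x0 ∈ C(T0) and let x : [T0,T] → H be the absolutely continuous solution with x(T0) = x0, x(t) ∈ C(t) for all t, and −x'(t) ∈ N_{C(t)}(x(t)) + f1(t,x(t)) + ∫_{T0}^t f2(t,s,x(s)) ds a.e. Set M := 2(‖x0‖ + ∫_{T0}^T |υ'(τ)| dτ + 1/2). Then: ‖f1(t, x(t))‖ ≤ (1 + M)·β1(t) for all t ∈ [T0,T]; ‖f2(t, s, x(s))‖ ≤ (1 + M)·β2(t,s) for all (t,s) ∈ Q_Δ; and ‖x'(t) + f1(t,x(t)) + ∫_{T0}^t f2(t,s,x(s)) ds‖ ≤ (1 + M)·(β1(t) + ∫_{T0}^t β2(t,s) ds) + |υ'(t)| for almost every t ∈ [T0,T]. -/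

import Mathlib

/-!
At almost every `t` both `x` and `υ` are differentiable. For `s < t`, the point `x s ∈ C s` lies
within `|υ t - υ s|` of `C t`, so the prox-regular inequality for the normal vector
`ζ = -x' t - g t` (with `g` the forcing term `f1 + ∫ f2`) at `x t`, divided by `t - s` and
letting `s → t⁻`, gives `-⟪ζ, x' t⟫ ≤ ‖ζ‖ |υ' t|`; the quadratic prox-regular term vanishes in
the limit. Hence `‖x' t + g t‖ ≤ ‖g t‖ + |υ' t|`. With `A = max ‖x‖`, the growth conditions give
`‖g t‖ ≤ (1 + A) β t` for `β t = β1 t + ∫ β2 t s ds`, so integrating `‖x'‖ ≤ |υ'| + 2 (1 + A) β`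
yields `A ≤ ‖x0‖ + ∫ |υ'| + (1 + A) / 2`, i.e. `A ≤ M`; the three estimates follow.
-/

open MeasureTheory Set
open scoped RealInnerProductSpace ENNReal Pointwise NNReal

noncomputable section

variable {H : Type*} [NormedAddCommGroup H] [InnerProductSpace ℝ H]

/-- The proximal normal cone of `S` at `x`. -/
def proxNormalCone (S : Set H) (x : H) : Set H :=
  {v | ∃ σ : ℝ, 0 ≤ σ ∧ ∃ δ : ℝ, 0 < δ ∧
    ∀ y ∈ S ∩ Metric.ball x δ, ⟪v, y - x⟫ ≤ σ * ‖y - x‖ ^ 2}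

/-- Uniform `r`-prox-regularity, `r ∈ (0, ∞]`. -/
def IsProxRegular (r : ℝ≥0∞) (S : Set H) : Prop :=
  ∀ x ∈ S, ∀ v ∈ proxNormalCone S x, v ≠ 0 →
    ∀ y ∈ S, ⟪‖v‖⁻¹ • v, y - x⟫ ≤ ((2 * r)⁻¹).toReal * ‖y - x‖ ^ 2

variable [CompleteSpace H]

/-- Absolutely continuous solution of the integro-differential sweeping process
`-x'(t) ∈ N_{C(t)}(x(t)) + f1(t, x(t)) + ∫_{T0}^t f2(t, s, x(s)) ds`. -/
def IsIDSweepingSol (T0 T : ℝ) (C : ℝ → Set H) (f1 : ℝ → H → H)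
    (f2 : ℝ → ℝ → H → H) (x x' : ℝ → H) : Prop :=
  IntervalIntegrable x' volume T0 T ∧
  (∀ t ∈ Icc T0 T, x t = x T0 + ∫ s in T0..t, x' s) ∧
  (∀ t ∈ Icc T0 T, x t ∈ C t) ∧
  (∀ᵐ t ∂volume, t ∈ Icc T0 T →
    (-x' t - f1 t (x t) - ∫ s in T0..t, f2 t s (x s)) ∈ proxNormalCone (C t) (x t))

open Filter Topology

section ProxRegular

variable {E : Type*} [NormedAddCommGroup E] [InnerProductSpace ℝ E]
  {r : ℝ≥0∞} {S : Set E} {x ζ : E}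

theorem IsProxRegular.inner_le (hS : IsProxRegular r S) (hx : x ∈ S)
    (hζ : ζ ∈ proxNormalCone S x) {y : E} (hy : y ∈ S) :
    ⟪ζ, y - x⟫ ≤ ‖ζ‖ * (((2 * r)⁻¹).toReal * ‖y - x‖ ^ 2) := by
  rcases eq_or_ne ζ 0 with rfl | hζ0
  · simp
  have hζpos : 0 < ‖ζ‖ := norm_pos_iff.2 hζ0
  have h := hS x hx ζ hζ hζ0 y hy
  rw [real_inner_smul_left] at h
  calc ⟪ζ, y - x⟫ = ‖ζ‖ * (‖ζ‖⁻¹ * ⟪ζ, y - x⟫) := by field_simp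
    _ ≤ _ := mul_le_mul_of_nonneg_left h hζpos.le

theorem IsProxRegular.inner_le_of_mem_add_smul_closedBall (hS : IsProxRegular r S) (hx : x ∈ S)
    (hζ : ζ ∈ proxNormalCone S x) {y : E} {c : ℝ} (hc : 0 ≤ c)
    (hy : y ∈ S + c • Metric.closedBall (0 : E) 1) :
    ⟪ζ, y - x⟫ ≤ ‖ζ‖ * (((2 * r)⁻¹).toReal * (‖y - x‖ + c) ^ 2 + c) := by
  obtain ⟨z, hz, _, ⟨b, hb, rfl⟩, rfl⟩ := hy
  have hcb : ‖c • b‖ ≤ c := by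
    rw [norm_smul, Real.norm_of_nonneg hc]
    exact mul_le_of_le_one_right hc (mem_closedBall_zero_iff.1 hb)
  have hzx : ‖z - x‖ ≤ ‖z + c • b - x‖ + c := by
    calc ‖z - x‖ = ‖(z + c • b - x) - c • b‖ := by congr 1; abel
      _ ≤ ‖z + c • b - x‖ + ‖c • b‖ := norm_sub_le _ _
      _ ≤ _ := by gcongr
  have hz_sq : ‖z - x‖ ^ 2 ≤ (‖z + c • b - x‖ + c) ^ 2 := by gcongr
  have hb_inner : ⟪ζ, c • b⟫ ≤ ‖ζ‖ * c :=
    (real_inner_le_norm _ _).trans (mul_le_mul_of_nonneg_left hcb (norm_nonneg _))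
  have hK : 0 ≤ ((2 * r)⁻¹).toReal := ENNReal.toReal_nonneg
  calc ⟪ζ, z + c • b - x⟫ = ⟪ζ, z - x⟫ + ⟪ζ, c • b⟫ := by
        rw [← inner_add_right]; congr 1; abel
    _ ≤ ‖ζ‖ * (((2 * r)⁻¹).toReal * ‖z - x‖ ^ 2) + ‖ζ‖ * c :=
        add_le_add (hS.inner_le hx hζ hz) hb_inner
    _ ≤ _ := by rw [mul_add]; gcongr

end ProxRegular

theorem norm_add_le_of_inner_le {E : Type*} [NormedAddCommGroup E] [InnerProductSpace ℝ E]
    {v g : E} {c : ℝ} (hc : 0 ≤ c) (h : ⟪v + g, v⟫ ≤ ‖v + g‖ * c) : ‖v + g‖ ≤ ‖g‖ + c := by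
  rcases (norm_nonneg (v + g)).eq_or_lt with h0 | hpos
  · rw [← h0]; positivity
  refine le_of_mul_le_mul_left ?_ hpos
  calc ‖v + g‖ * ‖v + g‖ = ⟪v + g, v⟫ + ⟪v + g, g⟫ := by
        rw [← inner_add_right, real_inner_self_eq_norm_mul_norm]
    _ ≤ ‖v + g‖ * c + ‖v + g‖ * ‖g‖ := add_le_add h (real_inner_le_norm _ _)
    _ = ‖v + g‖ * (‖g‖ + c) := by ring

theorem IsProxRegular.neg_inner_le_of_hasDerivWithinAt {E : Type*} [NormedAddCommGroup E]
    [InnerProductSpace ℝ E] {r : ℝ≥0∞} {S : Set E} {x : ℝ → E} {υ : ℝ → ℝ} {v ζ : E} {w t : ℝ}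
    (hS : IsProxRegular r S) (hxt : x t ∈ S) (hζ : ζ ∈ proxNormalCone S (x t))
    (hmove : ∀ᶠ s in 𝓝[<] t, x s ∈ S + |υ t - υ s| • Metric.closedBall (0 : E) 1)
    (hx : HasDerivWithinAt x v (Iio t) t) (hυ : HasDerivWithinAt υ w (Iio t) t) :
    -⟪ζ, v⟫ ≤ ‖ζ‖ * |w| := by
  set K := ((2 * r)⁻¹).toReal
  have hslope_x : Tendsto (slope x t) (𝓝[<] t) (𝓝 v) :=
    (hasDerivWithinAt_iff_tendsto_slope' self_notMem_Iio).1 hx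
  have hslope_υ : Tendsto (slope υ t) (𝓝[<] t) (𝓝 w) :=
    (hasDerivWithinAt_iff_tendsto_slope' self_notMem_Iio).1 hυ
  -- the prox-regular inequality at `x s`, divided by `t - s > 0`
  have hquot : ∀ᶠ s in 𝓝[<] t, -⟪ζ, slope x t s⟫ ≤
      ‖ζ‖ * (K * ((t - s) * (‖slope x t s‖ + |slope υ t s|) ^ 2) + |slope υ t s|) := by
    filter_upwards [hmove, self_mem_nhdsWithin] with s hs (hst : s < t)
    have hd : 0 < t - s := sub_pos.2 hst
    have hxs : x s - x t = -((t - s) • slope x t s) := by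
      rw [← neg_smul, neg_sub, sub_smul_slope, vsub_eq_sub]
    have hυs : |υ t - υ s| = (t - s) * |slope υ t s| := by
      have h := sub_smul_slope υ t s
      rw [vsub_eq_sub, smul_eq_mul] at h
      rw [abs_sub_comm, ← h, abs_mul, abs_sub_comm s, abs_of_pos hd]
    have h := hS.inner_le_of_mem_add_smul_closedBall hxt hζ (abs_nonneg _) hs
    rw [hυs, hxs, norm_neg, norm_smul, Real.norm_of_nonneg hd.le, inner_neg_right,
      real_inner_smul_right] at h
    refine le_of_mul_le_mul_left ?_ hd
    calc (t - s) * -⟪ζ, slope x t s⟫ ≤ ‖ζ‖ * (K * ((t - s) * ‖slope x t s‖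
          + (t - s) * |slope υ t s|) ^ 2 + (t - s) * |slope υ t s|) := by linarith
      _ = _ := by ring
  have hlim : Tendsto (fun s => ‖ζ‖ * (K * ((t - s) * (‖slope x t s‖ + |slope υ t s|) ^ 2)
      + |slope υ t s|)) (𝓝[<] t) (𝓝 (‖ζ‖ * (K * ((t - t) * (‖v‖ + |w|) ^ 2) + |w|))) := by
    have hd : Tendsto (fun s => t - s) (𝓝[<] t) (𝓝 (t - t)) :=
      (tendsto_const_nhds.sub tendsto_id).mono_left nhdsWithin_le_nhds
    exact ((((hd.mul ((hslope_x.norm.add hslope_υ.abs).pow 2)).const_mul K).add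
      hslope_υ.abs).const_mul _)
  have h := le_of_tendsto_of_tendsto (tendsto_const_nhds.inner hslope_x).neg hlim hquot
  simpa using h

section AbsolutelyContinuous

variable {E : Type*} [NormedAddCommGroup E] [NormedSpace ℝ E] {f f' : ℝ → E} {a b : ℝ}

theorem ae_hasDerivAt_of_eq_add_integral [CompleteSpace E]
    (hf' : IntervalIntegrable f' volume a b) (hf : ∀ t ∈ Icc a b, f t = f a + ∫ s in a..t, f' s) :
    ∀ᵐ t, t ∈ Ioo a b → HasDerivAt f (f' t) t := by
  filter_upwards [hf'.ae_hasDerivAt_integral] with t hderiv ht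
  have hab : a ≤ b := (ht.1.trans ht.2).le
  have htab : t ∈ uIcc a b := by rw [uIcc_of_le hab]; exact Ioo_subset_Icc_self ht
  refine ((hderiv htab a left_mem_uIcc).const_add (f a)).congr_of_eventuallyEq ?_
  filter_upwards [Ioo_mem_nhds ht.1 ht.2] with s hs using hf s (Ioo_subset_Icc_self hs)

theorem norm_le_add_integral_norm_of_eq_add_integral (hf' : IntervalIntegrable f' volume a b)
    (hf : ∀ t ∈ Icc a b, f t = f a + ∫ s in a..t, f' s) {t : ℝ} (ht : t ∈ Icc a b) :
    ‖f t‖ ≤ ‖f a‖ + ∫ s in a..b, ‖f' s‖ := by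
  rw [hf t ht]
  refine (norm_add_le _ _).trans (add_le_add_right ?_ _)
  calc ‖∫ s in a..t, f' s‖ ≤ ∫ s in a..t, ‖f' s‖ :=
        intervalIntegral.norm_integral_le_integral_norm ht.1
    _ ≤ ∫ s in a..b, ‖f' s‖ := intervalIntegral.integral_mono_interval le_rfl ht.1 ht.2
        (Eventually.of_forall fun _ => norm_nonneg _) hf'.norm

theorem continuousOn_of_eq_add_integral (hab : a ≤ b) (hf' : IntervalIntegrable f' volume a b)
    (hf : ∀ t ∈ Icc a b, f t = f a + ∫ s in a..t, f' s) : ContinuousOn f (Icc a b) := by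
  have h := intervalIntegral.continuousOn_primitive_interval (a := a) (b := b) (μ := volume)
    (f := f') (by rwa [uIcc_of_le hab, ← intervalIntegrable_iff_integrableOn_Icc_of_le hab])
  rw [uIcc_of_le hab] at h
  exact (continuousOn_const.add h).congr hf

theorem norm_le_of_ae_norm_deriv_add_le {g : ℝ → E} {w β : ℝ → ℝ} (hab : a ≤ b)
    (hf' : IntervalIntegrable f' volume a b) (hf : ∀ t ∈ Icc a b, f t = f a + ∫ s in a..t, f' s)
    (hw : IntervalIntegrable w volume a b) (hβ : IntervalIntegrable β volume a b)
    (hsmall : ∫ t in a..b, β t < 1 / 4)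
    (hderiv : ∀ᵐ t, t ∈ Icc a b → ‖f' t + g t‖ ≤ ‖g t‖ + |w t|)
    (hg : ∀ K, (∀ s ∈ Icc a b, ‖f s‖ ≤ K) → ∀ᵐ t, t ∈ Icc a b → ‖g t‖ ≤ (1 + K) * β t) :
    ∀ t ∈ Icc a b, ‖f t‖ ≤ 2 * (‖f a‖ + (∫ t in a..b, |w t|) + 1 / 2) := by
  obtain ⟨tm, htm, hmax⟩ := isCompact_Icc.exists_isMaxOn (nonempty_Icc.2 hab)
    (continuousOn_of_eq_add_integral hab hf' hf).norm
  set A := ‖f tm‖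
  have hA : ∀ s ∈ Icc a b, ‖f s‖ ≤ A := fun s hs => hmax hs
  have hf'_le : ∀ᵐ t, t ∈ Icc a b → ‖f' t‖ ≤ |w t| + 2 * (1 + A) * β t := by
    filter_upwards [hderiv, hg A hA] with t hdt hgt ht
    have := norm_sub_le (f' t + g t) (g t)
    rw [add_sub_cancel_right] at this
    linarith [hdt ht, hgt ht]
  have hint : ∫ t in a..b, ‖f' t‖ ≤ (∫ t in a..b, |w t|) + 2 * (1 + A) * ∫ t in a..b, β t := by
    rw [← intervalIntegral.integral_const_mul, ← intervalIntegral.integral_add hw.abs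
      (hβ.const_mul _)]
    exact intervalIntegral.integral_mono_ae_restrict hab hf'.norm (hw.abs.add (hβ.const_mul _))
      ((ae_restrict_iff' measurableSet_Icc).2 hf'_le)
  have hAf' := norm_le_add_integral_norm_of_eq_add_integral hf' hf htm
  have hA0 : 0 ≤ A := norm_nonneg _
  intro t ht
  nlinarith [hA t ht]

end AbsolutelyContinuous

section Triangle

/-- The paper's `Q_Δ`, on which the Volterra kernel `f2` lives. -/
def lowerTriangle (a b : ℝ) : Set (ℝ × ℝ) := {p | p.1 ∈ Icc a b ∧ p.2 ∈ Icc a b ∧ p.2 ≤ p.1}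

variable {E : Type*} [NormedAddCommGroup E] {β : ℝ → ℝ → E} {a b : ℝ}

theorem measurableSet_lowerTriangle : MeasurableSet (lowerTriangle a b) :=
  (measurable_fst measurableSet_Icc).inter
    ((measurable_snd measurableSet_Icc).inter (measurableSet_le measurable_snd measurable_fst))

theorem indicator_lowerTriangle_section {t : ℝ} (ht : t ∈ Icc a b) :
    (fun s => (lowerTriangle a b).indicator (fun p => β p.1 p.2) (t, s)) =
      (Icc a t).indicator (β t) := by
  ext s
  simp only [indicator_apply, lowerTriangle, mem_ofPred_eq]
  congr 1
  grind

theorem ae_intervalIntegrable_of_integrableOn_lowerTriangle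
    (hβ : IntegrableOn (fun p : ℝ × ℝ => β p.1 p.2) (lowerTriangle a b)) :
    ∀ᵐ t, t ∈ Icc a b → IntervalIntegrable (β t) volume a t := by
  have h := ((integrable_indicator_iff measurableSet_lowerTriangle).2 hβ)
  rw [Measure.volume_eq_prod] at h
  filter_upwards [h.prod_right_ae] with t hsec ht
  rw [indicator_lowerTriangle_section ht, integrable_indicator_iff measurableSet_Icc] at hsec
  exact (intervalIntegrable_iff_integrableOn_Icc_of_le ht.1).2 hsec

theorem intervalIntegrable_integral_of_integrableOn_lowerTriangle [NormedSpace ℝ E]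
    (hab : a ≤ b) (hβ : IntegrableOn (fun p : ℝ × ℝ => β p.1 p.2) (lowerTriangle a b)) :
    IntervalIntegrable (fun t => ∫ s in a..t, β t s) volume a b := by
  have h := ((integrable_indicator_iff measurableSet_lowerTriangle).2 hβ)
  rw [Measure.volume_eq_prod] at h
  rw [intervalIntegrable_iff_integrableOn_Icc_of_le hab]
  refine h.integral_prod_left.integrableOn.congr_fun (fun t ht => ?_) measurableSet_Icc
  simp only [indicator_lowerTriangle_section ht]
  rw [integral_indicator measurableSet_Icc, integral_Icc_eq_integral_Ioc,
    intervalIntegral.integral_of_le ht.1]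

end Triangle

theorem ae_norm_deriv_add_le_of_sweeping {E : Type*} [NormedAddCommGroup E]
    [InnerProductSpace ℝ E] [CompleteSpace E] {a b : ℝ} {x x' g : ℝ → E} {r : ℝ≥0∞}
    {C : ℝ → Set E} {υ υ' : ℝ → ℝ}
    (hC : ∀ t ∈ Icc a b, IsProxRegular r (C t))
    (hυ' : IntervalIntegrable υ' volume a b) (hυ : ∀ t ∈ Icc a b, υ t = υ a + ∫ s in a..t, υ' s)
    (hmove : ∀ s ∈ Icc a b, ∀ t ∈ Icc a b,
      C t ⊆ C s + |υ s - υ t| • Metric.closedBall (0 : E) 1)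
    (hx' : IntervalIntegrable x' volume a b) (hx : ∀ t ∈ Icc a b, x t = x a + ∫ s in a..t, x' s)
    (hxC : ∀ t ∈ Icc a b, x t ∈ C t)
    (hN : ∀ᵐ t, t ∈ Icc a b → -x' t - g t ∈ proxNormalCone (C t) (x t)) :
    ∀ᵐ t, t ∈ Icc a b → ‖x' t + g t‖ ≤ ‖g t‖ + |υ' t| := by
  filter_upwards [ae_hasDerivAt_of_eq_add_integral hx' hx,
    ae_hasDerivAt_of_eq_add_integral hυ' hυ, hN, Ioo_ae_eq_Icc.mem_iff] with t hxt hυt hNt hIoo ht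
  have ht' : t ∈ Ioo a b := hIoo.2 ht
  have hmove_t : ∀ᶠ s in 𝓝[<] t, x s ∈ C t + |υ t - υ s| • Metric.closedBall (0 : E) 1 := by
    filter_upwards [Ioo_mem_nhdsLT ht'.1] with s hs
    have hs' : s ∈ Icc a b := ⟨hs.1.le, hs.2.le.trans ht.2⟩
    exact hmove t ht s hs' (hxC s hs')
  have h := (hC t ht).neg_inner_le_of_hasDerivWithinAt (hxC t ht) (hNt ht) hmove_t
    (hxt ht').hasDerivWithinAt (hυt ht').hasDerivWithinAt
  rw [← neg_add', inner_neg_left, neg_neg, norm_neg] at h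
  exact norm_add_le_of_inner_le (abs_nonneg _) h

theorem norm_le_mul_of_norm_le_mul_one_add_norm {E F : Type*} [SeminormedAddCommGroup E]
    [SeminormedAddCommGroup F] {u : E} {y : F} {β K : ℝ} (hu : ‖u‖ ≤ β * (1 + ‖y‖)) (hβ : 0 ≤ β)
    (hy : ‖y‖ ≤ K) : ‖u‖ ≤ (1 + K) * β := by
  nlinarith

theorem norm_add_intervalIntegral_le {E : Type*} [NormedAddCommGroup E] [NormedSpace ℝ E]
    {u : E} {F : ℝ → E} {b1 c a t : ℝ} {b2 : ℝ → ℝ} (hat : a ≤ t) (hu : ‖u‖ ≤ c * b1)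
    (hF : ∀ s ∈ Icc a t, ‖F s‖ ≤ c * b2 s) (hb2 : IntervalIntegrable b2 volume a t) :
    ‖u + ∫ s in a..t, F s‖ ≤ c * (b1 + ∫ s in a..t, b2 s) := by
  have hint : ‖∫ s in a..t, F s‖ ≤ c * ∫ s in a..t, b2 s := by
    rw [← intervalIntegral.integral_const_mul]
    exact intervalIntegral.norm_integral_le_of_norm_le hat
      (Eventually.of_forall fun s hs => hF s (Ioc_subset_Icc_self hs)) (hb2.const_mul c)
  linarith [norm_add_le u (∫ s in a..t, F s)]

theorem integro_differential_sweeping_estimates_small_general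
    (T0 T : ℝ) (hT : T0 < T)
    (r : ℝ≥0∞)
    (C : ℝ → Set H)
    (hC : ∀ t ∈ Icc T0 T, (C t).Nonempty ∧ IsClosed (C t) ∧ IsProxRegular r (C t))
    (υ υ' : ℝ → ℝ)
    (hυint : IntervalIntegrable υ' volume T0 T)
    (hυAC : ∀ t ∈ Icc T0 T, υ t = υ T0 + ∫ s in T0..t, υ' s)
    (hmove : ∀ s ∈ Icc T0 T, ∀ t ∈ Icc T0 T,
      C t ⊆ C s + |υ s - υ t| • Metric.closedBall (0 : H) 1)
    (f1 : ℝ → H → H)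
    (β1 : ℝ → ℝ)
    (hβ1int : IntervalIntegrable β1 volume T0 T)
    (hβ1nn : ∀ t ∈ Icc T0 T, 0 ≤ β1 t)
    (hf1grow : ∀ t ∈ Icc T0 T, ∀ x ∈ ⋃ s ∈ Icc T0 T, C s, ‖f1 t x‖ ≤ β1 t * (1 + ‖x‖))
    (f2 : ℝ → ℝ → H → H)
    (β2 : ℝ → ℝ → ℝ)
    (hβ2int : IntegrableOn (fun p : ℝ × ℝ => β2 p.1 p.2)
      {p : ℝ × ℝ | p.1 ∈ Icc T0 T ∧ p.2 ∈ Icc T0 T ∧ p.2 ≤ p.1} volume)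
    (hβ2nn : ∀ t ∈ Icc T0 T, ∀ s ∈ Icc T0 t, 0 ≤ β2 t s)
    (hf2grow : ∀ t ∈ Icc T0 T, ∀ s ∈ Icc T0 t, ∀ x ∈ ⋃ u ∈ Icc T0 T, C u,
      ‖f2 t s x‖ ≤ β2 t s * (1 + ‖x‖))
    (hsmall : (∫ τ in T0..T, (β1 τ + ∫ s in T0..τ, β2 τ s)) < 1 / 4)
    (x0 : H)
    (x x' : ℝ → H) (hinit : x T0 = x0)
    (hx : IsIDSweepingSol T0 T C f1 f2 x x') :
    (∀ t ∈ Icc T0 T, ‖f1 t (x t)‖ ≤ (1 + 2 * (‖x0‖ + (∫ τ in T0..T, |υ' τ|) + 1 / 2)) * β1 t) ∧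
    (∀ t ∈ Icc T0 T, ∀ s ∈ Icc T0 t, ‖f2 t s (x s)‖ ≤ (1 + 2 * (‖x0‖ + (∫ τ in T0..T, |υ' τ|) + 1 / 2)) * β2 t s) ∧
    (∀ᵐ t ∂volume, t ∈ Icc T0 T →
      ‖x' t + f1 t (x t) + ∫ s in T0..t, f2 t s (x s)‖ ≤
        (1 + 2 * (‖x0‖ + (∫ τ in T0..T, |υ' τ|) + 1 / 2)) * (β1 t + ∫ s in T0..t, β2 t s) + |υ' t|) := by
  obtain ⟨hx'int, hxAC, hxC, hN⟩ := hx
  have hxD : ∀ t ∈ Icc T0 T, x t ∈ ⋃ s ∈ Icc T0 T, C s := fun t ht => mem_biUnion ht (hxC t ht)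
  have hf1b (K : ℝ) (hK : ∀ s ∈ Icc T0 T, ‖x s‖ ≤ K) (t : ℝ) (ht : t ∈ Icc T0 T) :
      ‖f1 t (x t)‖ ≤ (1 + K) * β1 t :=
    norm_le_mul_of_norm_le_mul_one_add_norm (hf1grow t ht _ (hxD t ht)) (hβ1nn t ht) (hK t ht)
  have hf2b (K : ℝ) (hK : ∀ s ∈ Icc T0 T, ‖x s‖ ≤ K) (t : ℝ) (ht : t ∈ Icc T0 T) (s : ℝ)
      (hs : s ∈ Icc T0 t) : ‖f2 t s (x s)‖ ≤ (1 + K) * β2 t s :=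
    have hs' : s ∈ Icc T0 T := ⟨hs.1, hs.2.trans ht.2⟩
    norm_le_mul_of_norm_le_mul_one_add_norm (hf2grow t ht s hs _ (hxD s hs')) (hβ2nn t ht s hs)
      (hK s hs')
  have hg (K : ℝ) (hK : ∀ s ∈ Icc T0 T, ‖x s‖ ≤ K) : ∀ᵐ t, t ∈ Icc T0 T →
      ‖f1 t (x t) + ∫ s in T0..t, f2 t s (x s)‖ ≤ (1 + K) * (β1 t + ∫ s in T0..t, β2 t s) := by
    filter_upwards [ae_intervalIntegrable_of_integrableOn_lowerTriangle hβ2int] with t hβ2t ht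
    exact norm_add_intervalIntegral_le ht.1 (hf1b K hK t ht) (hf2b K hK t ht) (hβ2t ht)
  have hderiv := ae_norm_deriv_add_le_of_sweeping (fun t ht => (hC t ht).2.2) hυint hυAC hmove
    hx'int hxAC hxC (by simpa only [sub_sub] using hN)
  have hxM := hinit ▸ norm_le_of_ae_norm_deriv_add_le hT.le hx'int hxAC hυint
    (hβ1int.add (intervalIntegrable_integral_of_integrableOn_lowerTriangle hT.le hβ2int))
    hsmall hderiv hg
  refine ⟨hf1b _ hxM, hf2b _ hxM, ?_⟩
  filter_upwards [hderiv, hg _ hxM] with t hdt hgt ht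
  rw [add_assoc]
  linarith [hdt ht, hgt ht]

/-- Estimates (31)-(33) under the smallness condition on the data. -/
theorem integro_differential_sweeping_estimates_small
    (T0 T : ℝ) (hT : T0 < T)
    (r : ℝ≥0∞) (hr : 0 < r)
    (C : ℝ → Set H)
    (hC : ∀ t ∈ Icc T0 T, (C t).Nonempty ∧ IsClosed (C t) ∧ IsProxRegular r (C t))
    (υ υ' : ℝ → ℝ)
    (hυint : IntervalIntegrable υ' volume T0 T)
    (hυAC : ∀ t ∈ Icc T0 T, υ t = υ T0 + ∫ s in T0..t, υ' s)
    (hmove : ∀ s ∈ Icc T0 T, ∀ t ∈ Icc T0 T,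
      C t ⊆ C s + |υ s - υ t| • Metric.closedBall (0 : H) 1)
    (f1 : ℝ → H → H)
    (hf1meas : ∀ x : H, StronglyMeasurable fun t => f1 t x)
    (β1 : ℝ → ℝ)
    (hβ1int : IntervalIntegrable β1 volume T0 T)
    (hβ1nn : ∀ t ∈ Icc T0 T, 0 ≤ β1 t)
    (hf1grow : ∀ t ∈ Icc T0 T, ∀ x ∈ ⋃ s ∈ Icc T0 T, C s, ‖f1 t x‖ ≤ β1 t * (1 + ‖x‖))
    (hf1lip : ∀ η : ℝ, 0 < η → ∃ L1 : ℝ → ℝ, IntervalIntegrable L1 volume T0 T ∧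
      (∀ t ∈ Icc T0 T, 0 ≤ L1 t) ∧
      ∀ t ∈ Icc T0 T, ∀ x ∈ Metric.closedBall (0 : H) η,
        ∀ y ∈ Metric.closedBall (0 : H) η, ‖f1 t x - f1 t y‖ ≤ L1 t * ‖x - y‖)
    (f2 : ℝ → ℝ → H → H)
    (hf2meas : ∀ x : H, StronglyMeasurable fun p : ℝ × ℝ => f2 p.1 p.2 x)
    (β2 : ℝ → ℝ → ℝ)
    (hβ2int : IntegrableOn (fun p : ℝ × ℝ => β2 p.1 p.2)
      {p : ℝ × ℝ | p.1 ∈ Icc T0 T ∧ p.2 ∈ Icc T0 T ∧ p.2 ≤ p.1} volume)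
    (hβ2nn : ∀ t ∈ Icc T0 T, ∀ s ∈ Icc T0 t, 0 ≤ β2 t s)
    (hf2grow : ∀ t ∈ Icc T0 T, ∀ s ∈ Icc T0 t, ∀ x ∈ ⋃ u ∈ Icc T0 T, C u,
      ‖f2 t s x‖ ≤ β2 t s * (1 + ‖x‖))
    (hf2lip : ∀ η : ℝ, 0 < η → ∃ L2 : ℝ → ℝ, IntervalIntegrable L2 volume T0 T ∧
      (∀ t ∈ Icc T0 T, 0 ≤ L2 t) ∧
      ∀ t ∈ Icc T0 T, ∀ s ∈ Icc T0 t, ∀ x ∈ Metric.closedBall (0 : H) η,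
        ∀ y ∈ Metric.closedBall (0 : H) η, ‖f2 t s x - f2 t s y‖ ≤ L2 t * ‖x - y‖)
    (hsmall : (∫ τ in T0..T, (β1 τ + ∫ s in T0..τ, β2 τ s)) < 1 / 4)
    (x0 : H) (hx0 : x0 ∈ C T0)
    (x x' : ℝ → H) (hinit : x T0 = x0)
    (hx : IsIDSweepingSol T0 T C f1 f2 x x') :
    (∀ t ∈ Icc T0 T, ‖f1 t (x t)‖ ≤ (1 + 2 * (‖x0‖ + (∫ τ in T0..T, |υ' τ|) + 1 / 2)) * β1 t) ∧
    (∀ t ∈ Icc T0 T, ∀ s ∈ Icc T0 t, ‖f2 t s (x s)‖ ≤ (1 + 2 * (‖x0‖ + (∫ τ in T0..T, |υ' τ|) + 1 / 2)) * β2 t s) ∧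
    (∀ᵐ t ∂volume, t ∈ Icc T0 T →
      ‖x' t + f1 t (x t) + ∫ s in T0..t, f2 t s (x s)‖ ≤
        (1 + 2 * (‖x0‖ + (∫ τ in T0..T, |υ' τ|) + 1 / 2)) * (β1 t + ∫ s in T0..t, β2 t s) + |υ' t|) :=
  integro_differential_sweeping_estimates_small_general T0 T hT r C hC υ υ' hυint hυAC hmove f1 β1
    hβ1int hβ1nn hf1grow f2 β2 hβ2int hβ2nn hf2grow hsmall x0 x x' hinit hx
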